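/- arXiv:1612.07041 — 5 statements merged into one kernel-verified Lean document; each statement's English description precedes it below -/
import Mathlib

section
/- For all integers p ≥ 1, q ≥ 0, k ≥ 1 and every real number t: Σ_{j_1,…,j_{p+1} ≥ 0} (1/k)·C(k, j_1+1)·C(k, j_2)···C(k, j_{p+1})·C(qk, j_1+⋯+j_{p+1} − pk)·t^{j_{p+1}} = Σ_{j=1}^{k} (1/k)·C((p+q)k, j−1)·C(k, j)·t^{j}. -/
open Finset
open scoped Classical

/-- `P` is a set partition of `{1,…,n}` (modelled on `Fin n`): a collection of nonempty
blocks such that every element belongs to exactly one block. -/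
def IsPartitionOf (n : ℕ) (P : Finset (Finset (Fin n))) : Prop :=
  (∀ B ∈ P, B.Nonempty) ∧ ∀ s : Fin n, ∃! B, B ∈ P ∧ s ∈ B

/-- `a` and `b` lie in a common block of `P`. -/
def SameBlock {n : ℕ} (P : Finset (Finset (Fin n))) (a b : Fin n) : Prop :=
  ∃ B ∈ P, a ∈ B ∧ b ∈ B

/-- A partition is noncrossing if there are no `a < b < c < d` with `a, c` in one block
and `b, d` in another, distinct block. -/
def IsNoncrossing {n : ℕ} (P : Finset (Finset (Fin n))) : Prop :=
  ∀ a b c d : Fin n, a < b → b < c → c < d →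
    SameBlock P a c → SameBlock P b d → SameBlock P a b

/-- A perfect matching (pair partition): a partition all of whose blocks have two elements. -/
def IsPairPartition (n : ℕ) (P : Finset (Finset (Fin n))) : Prop :=
  IsPartitionOf n P ∧ ∀ B ∈ P, B.card = 2

/-- The block of `P` containing `s`. -/
noncomputable def theBlock {n : ℕ} (P : Finset (Finset (Fin n))) (s : Fin n) :
    Finset (Fin n) :=
  univ.filter (fun t => SameBlock P s t)

/-- The cycle permutation `σ_π` of a partition: on a block `{s₁ < s₂ < … < s_m}` it sends
`s_i` to `s_{i+1}` for `i < m` and sends `s_m` back to `s₁`. -/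
noncomputable def cyclePerm {n : ℕ} (P : Finset (Finset (Fin n))) (s : Fin n) : Fin n :=
  if h : ((theBlock P s).filter (fun t => s < t)).Nonempty then
    ((theBlock P s).filter (fun t => s < t)).min' h
  else if h' : (theBlock P s).Nonempty then (theBlock P s).min' h' else s

/-- The 1-based value of `s : Fin n`, i.e. the corresponding element of `{1,…,n}`. -/
def val1 {n : ℕ} (s : Fin n) : ℕ := s.val + 1

/-- The residue in `{1,…,m}` of the (1-based) element corresponding to `s : Fin n`. -/
def res {n : ℕ} (s : Fin n) (m : ℕ) : ℕ := s.val % m + 1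

/-- The map `α`, sending a partition `π` of `{1,…,n}` to the collection of pairs
`{2s, 2σ_π(s) − 1}`, `s ∈ {1,…,n}` (in 0-based indexing, `2s ↦ 2s+1` and
`2σ_π(s)−1 ↦ 2⬝(σ_π(s))`). -/
noncomputable def alphaMap {n : ℕ} (P : Finset (Finset (Fin n))) :
    Finset (Finset (Fin (2*n))) :=
  (univ : Finset (Fin n)).image fun s =>
    ({⟨2 * s.val + 1, by have := s.isLt; omega⟩,
      ⟨2 * (cyclePerm P s).val, by have := (cyclePerm P s).isLt; omega⟩} :
      Finset (Fin (2*n)))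

/-- Substitution `Σ_{i≥0} t_i g^i` of a power series with zero constant term into the
series with coefficient sequence `t`; the `m`-th coefficient only involves `i ≤ m`. -/
noncomputable def substSeries (t : ℕ → ℝ) (g : PowerSeries ℝ) : PowerSeries ℝ :=
  PowerSeries.mk fun m =>
    ∑ i ∈ Finset.range (m+1), t i * (PowerSeries.coeff m) (g ^ i)

/-- The even part `Σ a_{2n} z^{2n}` of a formal power series `Σ a_n z^n`. -/
noncomputable def evenPart (f : PowerSeries ℝ) : PowerSeries ℝ :=
  PowerSeries.mk fun n => if Even n then PowerSeries.coeff n f else 0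

/-!
Both sides are coefficients of polynomials. Writing `C(k, j₁ + 1)` as a coefficient of
`divX (1 + X)^k`, `C(k, j) t^j` as one of `(1 + tX)^k`, and reflecting
`C(qk, |j| - pk) = C(qk, (p + q)k - |j|)`, the left side becomes `1/k` times the coefficient of
`X^{(p+q)k}` in `divX (1 + X)^k · (1 + X)^{(p-1)k} · (1 + tX)^k · (1 + X)^{qk}`. Undoing `divX`
costs nothing because the remaining factor has degree `(p + q)k`, so this is the coefficient of
`X^{(p+q)k+1}` in `(1 + X)^{(p+q)k} (1 + tX)^k`, which is the right side.
-/

open Polynomial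

namespace Polynomial

variable {R : Type*} [CommSemiring R]

theorem coeff_prod_mul_eq_finsum {ι : Type*} [Fintype ι] [DecidableEq ι] (P : ι → R[X])
    (Q : R[X]) (n : ℕ) :
    ((∏ i, P i) * Q).coeff n =
      ∑ᶠ j : ι → ℕ, (∏ i, (P i).coeff (j i)) * (X ^ (∑ i, j i) * Q).coeff n := by
  set box := Fintype.piFinset fun i => range ((P i).natDegree + 1)
  have hsupp : Function.support
      (fun j : ι → ℕ => (∏ i, (P i).coeff (j i)) * (X ^ (∑ i, j i) * Q).coeff n) ⊆ box := by
    intro j hj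
    by_contra hbox
    obtain ⟨i, hi⟩ : ∃ i, (P i).natDegree < j i := by simpa [box] using hbox
    apply hj
    dsimp only
    rw [prod_eq_zero (mem_univ i) (coeff_eq_zero_of_natDegree_lt hi), zero_mul]
  have hexpand : ∏ i, P i = ∑ j ∈ box, C (∏ i, (P i).coeff (j i)) * X ^ (∑ i, j i) := by
    calc ∏ i, P i
        = ∏ i, ∑ m ∈ range ((P i).natDegree + 1), C ((P i).coeff m) * X ^ m :=
          prod_congr rfl fun i _ => as_sum_range_C_mul_X_pow (P i)
      _ = ∑ j ∈ box, ∏ i, C ((P i).coeff (j i)) * X ^ j i := prod_univ_sum _ _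
      _ = _ := by simp only [prod_mul_distrib, map_prod, prod_pow_eq_pow_sum]
  rw [finsum_eq_sum_of_support_subset _ hsupp, hexpand, sum_mul, finsetSum_coeff]
  simp only [mul_assoc, coeff_C_mul]

theorem coeff_X_pow_mul_one_add_X_pow_comm (a b m : ℕ) :
    (X ^ a * (1 + X) ^ m : R[X]).coeff b = (X ^ b * (1 + X) ^ m : R[X]).coeff (a + m) := by
  simp only [coeff_X_pow_mul', coeff_one_add_X_pow]
  by_cases hab : a ≤ b <;> by_cases hbm : b ≤ a + m
  · rw [if_pos hab, if_pos hbm,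
      Nat.choose_symm_of_eq_add (show m = (b - a) + (a + m - b) by omega)]
  · rw [if_pos hab, if_neg hbm, Nat.choose_eq_zero_of_lt (by omega), Nat.cast_zero]
  · rw [if_neg hab, if_pos hbm, Nat.choose_eq_zero_of_lt (by omega), Nat.cast_zero]
  · rw [if_neg hab, if_neg hbm]

theorem coeff_divX_mul_of_natDegree_le (F G : R[X]) {n : ℕ} (h : G.natDegree ≤ n) :
    (divX F * G).coeff n = (F * G).coeff (n + 1) := by
  conv_rhs => rw [← divX_mul_X_add F]
  rw [add_mul, coeff_add, mul_right_comm, coeff_mul_X, coeff_C_mul,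
    coeff_eq_zero_of_natDegree_lt (p := G) (by omega), mul_zero, add_zero]

theorem coeff_one_add_C_mul_X_pow (a : R) (n m : ℕ) :
    ((1 + C a * X) ^ n).coeff m = a ^ m * n.choose m := by
  rw [add_comm, add_pow, finsetSum_coeff]
  simp only [one_pow, mul_one, mul_pow, ← map_pow, coeff_mul_natCast, coeff_C_mul_X_pow, ite_mul,
    zero_mul, sum_ite_eq, mem_range]
  split_ifs with h
  · rfl
  · rw [Nat.choose_eq_zero_of_lt (by omega), Nat.cast_zero, mul_zero]

theorem coeff_one_add_X_pow_mul_one_add_C_mul_X_pow (a : R) {n k : ℕ} (hk : k ≤ n + 1) :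
    ((1 + X) ^ n * (1 + C a * X) ^ k).coeff (n + 1) =
      ∑ j ∈ Icc 1 k, (n.choose (j - 1) : R) * k.choose j * a ^ j := by
  rw [mul_comm, coeff_mul, Nat.sum_antidiagonal_eq_sum_range_succ_mk]
  simp only [coeff_one_add_C_mul_X_pow, coeff_one_add_X_pow]
  symm
  refine sum_subset_zero_on_sdiff (fun j hj => ?_) (fun j hj => ?_) (fun j hj => ?_)
  · simp only [mem_Icc, mem_range] at hj ⊢; omega
  · simp only [mem_sdiff, mem_Icc, mem_range] at hj
    rcases Nat.eq_zero_or_pos j with rfl | hj0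
    · simp
    · simp [Nat.choose_eq_zero_of_lt (show k < j by omega)]
  · simp only [mem_Icc] at hj
    rw [Nat.choose_symm_of_eq_add (show n = (j - 1) + (n + 1 - j) by omega)]
    ring

end Polynomial

noncomputable def momentFactor (k : ℕ) (t : ℝ) (p : ℕ) (i : Fin (p + 2)) : ℝ[X] :=
  if i = 0 then C (1 / (k : ℝ)) * divX ((1 + X) ^ k)
  else if i = Fin.last (p + 1) then (1 + C t * X) ^ k else (1 + X) ^ k

section momentFactor

variable (k : ℕ) (t : ℝ) (p : ℕ)

theorem last_mem_univ_erase_zero : Fin.last (p + 1) ∈ univ.erase (0 : Fin (p + 2)) :=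
  mem_erase.2 ⟨Fin.last_pos.ne', mem_univ _⟩

theorem prod_coeff_momentFactor (j : Fin (p + 2) → ℕ) :
    ∏ i, (momentFactor k t p i).coeff (j i) =
      1 / (k : ℝ) * k.choose (j 0 + 1) * (∏ i ∈ univ.erase 0, (k.choose (j i) : ℝ)) *
        t ^ j (Fin.last (p + 1)) := by
  have hcoeff : ∀ i ∈ univ.erase (0 : Fin (p + 2)), (momentFactor k t p i).coeff (j i) =
      (if i = Fin.last (p + 1) then t ^ j i else 1) * k.choose (j i) := by
    intro i hi
    simp only [momentFactor, if_neg (ne_of_mem_erase hi)]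
    split_ifs <;> simp [coeff_one_add_C_mul_X_pow, coeff_one_add_X_pow]
  rw [← mul_prod_erase _ _ (mem_univ 0), prod_congr rfl hcoeff, prod_mul_distrib, prod_ite_eq',
    if_pos (last_mem_univ_erase_zero p)]
  simp only [momentFactor, ↓reduceIte, coeff_C_mul, coeff_divX, coeff_one_add_X_pow]
  ring

theorem prod_momentFactor :
    ∏ i, momentFactor k t p i =
      C (1 / (k : ℝ)) * (divX ((1 + X) ^ k) * ((1 + X) ^ k) ^ p * (1 + C t * X) ^ k) := by
  have hlast := last_mem_univ_erase_zero p
  have hmiddle : ∀ i ∈ (univ.erase (0 : Fin (p + 2))).erase (Fin.last (p + 1)),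
      momentFactor k t p i = (1 + X) ^ k :=
    fun i hi => by simp [momentFactor, ne_of_mem_erase hi, ne_of_mem_erase (mem_of_mem_erase hi)]
  rw [← mul_prod_erase _ _ (mem_univ 0), ← mul_prod_erase _ _ hlast, prod_congr rfl hmiddle,
    prod_const, card_erase_of_mem hlast, card_erase_of_mem (mem_univ _), card_univ,
    Fintype.card_fin, show p + 2 - 1 - 1 = p by omega]
  simp only [momentFactor, ↓reduceIte, if_neg Fin.last_pos.ne']
  ring

end momentFactor

theorem statement6_general (p q k : ℕ) (hp : 1 ≤ p) (t : ℝ) :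
    (∑ᶠ j : Fin (p+1) → ℕ,
      (1 / (k : ℝ)) * (Nat.choose k (j 0 + 1) : ℝ) *
        (∏ i ∈ Finset.univ.erase (0 : Fin (p+1)), (Nat.choose k (j i) : ℝ)) *
        (if p*k ≤ ∑ i, j i then (Nat.choose (q*k) ((∑ i, j i) - p*k) : ℝ) else 0) *
        t ^ (j (Fin.last p))) =
    ∑ j ∈ Finset.Icc 1 k,
      (1 / (k : ℝ)) * (Nat.choose ((p+q)*k) (j-1) : ℝ) * (Nat.choose k j : ℝ) * t ^ j := by
  obtain ⟨p, rfl⟩ : ∃ p', p = p' + 1 := ⟨p - 1, by omega⟩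
  have hsummand : ∀ j : Fin (p + 2) → ℕ,
      (1 / (k : ℝ)) * (Nat.choose k (j 0 + 1) : ℝ) *
        (∏ i ∈ Finset.univ.erase (0 : Fin (p+2)), (Nat.choose k (j i) : ℝ)) *
        (if (p+1)*k ≤ ∑ i, j i then (Nat.choose (q*k) ((∑ i, j i) - (p+1)*k) : ℝ) else 0) *
        t ^ (j (Fin.last (p+1))) =
      (∏ i, (momentFactor k t p i).coeff (j i)) *
        (X ^ (∑ i, j i) * (1 + X) ^ (q * k)).coeff ((p + 1) * k + q * k) := by
    intro j
    rw [prod_coeff_momentFactor, ← coeff_X_pow_mul_one_add_X_pow_comm, coeff_X_pow_mul',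
      coeff_one_add_X_pow]
    ring
  have hdeg : (((1 + X) ^ k) ^ p * (1 + C t * X) ^ k * (1 + X) ^ (q * k) : ℝ[X]).natDegree ≤
      (p + 1) * k + q * k := by
    compute_degree
    exact (by ring : p * k + k + q * k = (p + 1) * k + q * k).le
  calc _ = ((∏ i, momentFactor k t p i) * (1 + X) ^ (q * k)).coeff ((p + 1) * k + q * k) := by
        rw [finsum_congr hsummand, coeff_prod_mul_eq_finsum]
    _ = 1 / (k : ℝ) * ((1 + X) ^ ((p + 1 + q) * k) * (1 + C t * X) ^ k).coeff
          ((p + 1 + q) * k + 1) := by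
        rw [prod_momentFactor, mul_assoc, coeff_C_mul, mul_assoc, mul_assoc,
          coeff_divX_mul_of_natDegree_le _ _ (by rwa [← mul_assoc])]
        ring_nf
    _ = _ := by
        rw [coeff_one_add_X_pow_mul_one_add_C_mul_X_pow t (by nlinarith), mul_sum]
        simp only [mul_assoc]

/-- Example 6.1. For all `p ≥ 1`, `q ≥ 0`, `k ≥ 1` and real `t`:
`Σ_{j₁,…,j_{p+1} ≥ 0} (1/k)·C(k,j₁+1)·C(k,j₂)⋯C(k,j_{p+1})·C(qk, |j|−pk)·t^{j_{p+1}}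
 = Σ_{j=1}^k (1/k)·C((p+q)k, j−1)·C(k,j)·t^j`
(with the convention `C(n,m) = 0` unless `0 ≤ m ≤ n`; only finitely many terms on the
left are nonzero). -/
theorem statement6 (p q k : ℕ) (hp : 1 ≤ p) (hk : 1 ≤ k) (t : ℝ) :
    (∑ᶠ j : Fin (p+1) → ℕ,
      (1 / (k : ℝ)) * (Nat.choose k (j 0 + 1) : ℝ) *
        (∏ i ∈ Finset.univ.erase (0 : Fin (p+1)), (Nat.choose k (j i) : ℝ)) *
        (if p*k ≤ ∑ i, j i then (Nat.choose (q*k) ((∑ i, j i) - p*k) : ℝ) else 0) *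
        t ^ (j (Fin.last p))) =
    ∑ j ∈ Finset.Icc 1 k,
      (1 / (k : ℝ)) * (Nat.choose ((p+q)*k) (j-1) : ℝ) * (Nat.choose k j : ℝ) * t ^ j :=
  statement6_general p q k hp t
end

section
/- For all integers p ≥ 1, q ≥ 0, k ≥ 1 and every real number t: Σ_{j_1,…,j_{p+1} ≥ 0} (1/k)·C(k, j_1+1)·C(k, j_2)···C(k, j_{p+1})·C(qk, j_1+⋯+j_{p+1} − pk)·t^{j_1+⋯+j_{p+1}} = Σ_{j=1}^{k} (1/k)·C((p+1)k, j−1)·C(qk, k−j)·t^{(p+1)k−j}. -/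
open Finset
open scoped Classical

/-! The numbers `C(k, j + 1)` and `C(k, j)` are the coefficients of `((1 + X)^k - 1) / X` and of
`(1 + X)^k`. Grouping the left-hand sum according to `m = j₁ + ⋯ + j_{p+1}`, the inner sums become the
coefficients of `((1 + X)^k - 1) / X · (1 + X)^{pk}`, namely `C((p+1)k, m+1) - C(pk, m+1)`. The factor
`C(qk, m - pk)` leaves only `pk ≤ m < (p+1)k`, where the second binomial vanishes, and `m = (p+1)k - j`
gives the right-hand side. -/

namespace Polynomial

variable {R : Type*}

section Semiring

variable [CommSemiring R] {ι : Type*} [Fintype ι]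

theorem sum_piFinset_prod_coeff_mul (f : ι → R[X]) {N : ℕ} (hf : ∀ i, (f i).natDegree ≤ N)
    (g : ℕ → R) :
    ∑ j ∈ Fintype.piFinset (fun _ : ι => range (N + 1)), (∏ i, (f i).coeff (j i)) * g (∑ i, j i) =
      ∑ m ∈ range (Fintype.card ι * N + 1), (∏ i, f i).coeff m * g m := by
  have hprod : ∏ i, f i = ∑ j ∈ Fintype.piFinset (fun _ : ι => range (N + 1)),
      C (∏ i, (f i).coeff (j i)) * X ^ ∑ i, j i := by
    calc ∏ i, f i = ∏ i, ∑ n ∈ range (N + 1), C ((f i).coeff n) * X ^ n :=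
          prod_congr rfl fun i _ => as_sum_range_C_mul_X_pow' _ (Nat.lt_succ_of_le (hf i))
      _ = _ := by
          rw [prod_univ_sum]
          simp only [prod_mul_distrib, map_prod, prod_pow_eq_pow_sum]
  have hdeg : ∀ j ∈ Fintype.piFinset (fun _ : ι => range (N + 1)),
      ∑ i, j i ∈ range (Fintype.card ι * N + 1) := by
    intro j hj
    simp only [Fintype.mem_piFinset, mem_range, Nat.lt_succ_iff] at hj ⊢
    simpa using sum_le_sum fun i (_ : i ∈ univ) => hj i
  simp_rw [hprod, finsetSum_coeff, coeff_C_mul_X_pow, sum_mul, ite_mul, zero_mul]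
  rw [sum_comm]
  exact sum_congr rfl fun j hj => by rw [sum_ite_eq', if_pos (hdeg j hj)]

theorem finsum_prod_coeff_mul (f : ι → R[X]) {N : ℕ} (hf : ∀ i, (f i).natDegree ≤ N)
    (g : ℕ → R) :
    ∑ᶠ j : ι → ℕ, (∏ i, (f i).coeff (j i)) * g (∑ i, j i) =
      ∑ m ∈ range (Fintype.card ι * N + 1), (∏ i, f i).coeff m * g m := by
  rw [← sum_piFinset_prod_coeff_mul f hf g]
  refine finsum_eq_sum_of_support_subset _ fun j hj => ?_
  simp only [Fintype.coe_piFinset, Set.mem_pi, Set.mem_univ, mem_coe, mem_range, forall_const]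
  intro i
  by_contra hi
  have hcoeff : (f i).coeff (j i) = 0 :=
    coeff_eq_zero_of_natDegree_lt ((hf i).trans_lt (by omega))
  exact hj (mul_eq_zero_of_left (prod_eq_zero (mem_univ i) hcoeff) _)

end Semiring

theorem coeff_divX_mul [CommRing R] (p q : R[X]) (m : ℕ) :
    (p.divX * q).coeff m = (p * q).coeff (m + 1) - p.coeff 0 * q.coeff (m + 1) := by
  have h : (p * q).coeff (m + 1) = (p.divX * q).coeff m + p.coeff 0 * q.coeff (m + 1) := by
    conv_lhs => rw [← divX_mul_X_add p]
    rw [add_mul, mul_right_comm, coeff_add, coeff_mul_X, coeff_C_mul]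
  rw [h, add_sub_cancel_right]

theorem coeff_divX_X_add_one_pow_mul [CommRing R] (k n m : ℕ) :
    (((X + 1 : R[X]) ^ k).divX * (X + 1) ^ n).coeff m =
      ((n + k).choose (m + 1) : R) - (n.choose (m + 1) : R) := by
  rw [coeff_divX_mul, ← pow_add, add_comm k, coeff_X_add_one_pow, coeff_X_add_one_pow,
    coeff_X_add_one_pow, Nat.choose_zero_right, Nat.cast_one, one_mul]

end Polynomial

open Polynomial

theorem sum_range_choose_sub_choose_mul_eq_sum_Icc (p q k : ℕ) (c t : ℝ) :
    ∑ m ∈ range ((p + 1) * k + 1), (((p * k + k).choose (m + 1) : ℝ) - (p * k).choose (m + 1)) *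
        (c * (if p * k ≤ m then ((q * k).choose (m - p * k) : ℝ) else 0) * t ^ m) =
      ∑ j ∈ Icc 1 k, c * ((p + 1) * k).choose (j - 1) * (q * k).choose (k - j) *
        t ^ ((p + 1) * k - j) := by
  have hn : (p + 1) * k = p * k + k := by ring
  symm
  calc _ = ∑ m ∈ Ico (p * k) ((p + 1) * k), (((p * k + k).choose (m + 1) : ℝ) -
          (p * k).choose (m + 1)) *
          (c * (if p * k ≤ m then ((q * k).choose (m - p * k) : ℝ) else 0) * t ^ m) := by
        refine sum_nbij' (fun j => (p + 1) * k - j) (fun m => (p + 1) * k - m) ?_ ?_ ?_ ?_ ?_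
        iterate 4 (intro a ha; simp only [mem_Icc, mem_Ico] at ha ⊢; omega)
        intro j hj
        simp only [mem_Icc] at hj
        rw [Nat.choose_eq_zero_of_lt (n := p * k) (by omega), if_pos (by omega),
          show (p + 1) * k - j - p * k = k - j by omega, ← hn,
          Nat.choose_symm_of_eq_add (show (p + 1) * k = ((p + 1) * k - j + 1) + (j - 1) by omega)]
        push_cast
        ring
    _ = _ := by
        refine sum_subset (fun m hm => ?_) fun m hm hm' => ?_
        · simp only [mem_Ico, mem_range] at hm ⊢
          omega
        · simp only [mem_Ico, mem_range, not_and_or, not_le, not_lt] at hm hm'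
          rcases hm' with hm' | hm'
          · simp [not_le.2 hm']
          · rw [Nat.choose_eq_zero_of_lt (n := p * k + k) (by omega),
              Nat.choose_eq_zero_of_lt (n := p * k) (by omega)]
            simp

theorem statement7_general (p q k : ℕ) (t : ℝ) :
    (∑ᶠ j : Fin (p+1) → ℕ,
      (1 / (k : ℝ)) * (Nat.choose k (j 0 + 1) : ℝ) *
        (∏ i ∈ Finset.univ.erase (0 : Fin (p+1)), (Nat.choose k (j i) : ℝ)) *
        (if p*k ≤ ∑ i, j i then (Nat.choose (q*k) ((∑ i, j i) - p*k) : ℝ) else 0) *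
        t ^ (∑ i, j i)) =
    ∑ j ∈ Finset.Icc 1 k,
      (1 / (k : ℝ)) * (Nat.choose ((p+1)*k) (j-1) : ℝ) * (Nat.choose (q*k) (k-j) : ℝ) *
        t ^ ((p+1)*k - j) := by
  set f : Fin (p + 1) → ℝ[X] := fun i => if i = 0 then ((X + 1) ^ k).divX else (X + 1) ^ k
  set g : ℕ → ℝ := fun m =>
    1 / k * (if p * k ≤ m then ((q * k).choose (m - p * k) : ℝ) else 0) * t ^ m
  have hdeg : ∀ i, (f i).natDegree ≤ k := by
    have hpow : ((X + 1 : ℝ[X]) ^ k).natDegree ≤ k := by compute_degree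
    intro i
    by_cases hi : i = 0
    · simpa [f, hi] using natDegree_divX_le.trans hpow
    · simpa [f, hi] using hpow
  have hprod : ∏ i, f i = ((X + 1) ^ k).divX * (X + 1) ^ (p * k) := by
    simp [f, Fin.prod_univ_succ, Fin.succ_ne_zero, pow_mul']
  have hsummand : ∀ j : Fin (p + 1) → ℕ,
      1 / (k : ℝ) * (k.choose (j 0 + 1) : ℝ) *
        (∏ i ∈ univ.erase 0, (k.choose (j i) : ℝ)) *
        (if p * k ≤ ∑ i, j i then ((q * k).choose ((∑ i, j i) - p * k) : ℝ) else 0) *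
        t ^ (∑ i, j i) = (∏ i, (f i).coeff (j i)) * g (∑ i, j i) := by
    intro j
    have hrest : ∀ i ∈ univ.erase 0, (f i).coeff (j i) = k.choose (j i) := fun i hi => by
      simp [f, ne_of_mem_erase hi, coeff_X_add_one_pow]
    rw [← mul_prod_erase univ (fun i => (f i).coeff (j i)) (mem_univ 0), prod_congr rfl hrest]
    simp only [f, g, if_true, coeff_divX, coeff_X_add_one_pow]
    ring
  rw [finsum_congr hsummand, finsum_prod_coeff_mul f hdeg g, hprod, Fintype.card_fin]
  simp_rw [coeff_divX_X_add_one_pow_mul]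
  exact sum_range_choose_sub_choose_mul_eq_sum_Icc p q k _ t

/-- Example 6.2. For all `p ≥ 1`, `q ≥ 0`, `k ≥ 1` and real `t`:
`Σ_{j₁,…,j_{p+1} ≥ 0} (1/k)·C(k,j₁+1)·C(k,j₂)⋯C(k,j_{p+1})·C(qk, |j|−pk)·t^{|j|}
 = Σ_{j=1}^k (1/k)·C((p+1)k, j−1)·C(qk, k−j)·t^{(p+1)k−j}`
(with the convention `C(n,m) = 0` unless `0 ≤ m ≤ n`; only finitely many terms on the
left are nonzero). -/
theorem statement7 (p q k : ℕ) (hp : 1 ≤ p) (hk : 1 ≤ k) (t : ℝ) :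
    (∑ᶠ j : Fin (p+1) → ℕ,
      (1 / (k : ℝ)) * (Nat.choose k (j 0 + 1) : ℝ) *
        (∏ i ∈ Finset.univ.erase (0 : Fin (p+1)), (Nat.choose k (j i) : ℝ)) *
        (if p*k ≤ ∑ i, j i then (Nat.choose (q*k) ((∑ i, j i) - p*k) : ℝ) else 0) *
        t ^ (∑ i, j i)) =
    ∑ j ∈ Finset.Icc 1 k,
      (1 / (k : ℝ)) * (Nat.choose ((p+1)*k) (j-1) : ℝ) * (Nat.choose (q*k) (k-j) : ℝ) *
        t ^ ((p+1)*k - j) :=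
  statement7_general p q k t
end

section
/- Let ψ ∈ ℝ[[z]] have zero constant term and let ψ_e denote its even part. If ψ = z·(ψ + 1)·(ψ_e + 1) as formal power series, then ψ_e = z²·(ψ_e + 1)³, and for every n ≥ 1 the coefficient of z^{2n} in ψ equals the Fuss–Catalan number (1/(2n+1))·C(3n, n). -/
open Finset
open scoped Classical

/-!
Substituting `-z` for `z` fixes the even part `e` of `ψ` and negates its odd part `o`, so the
equation `ψ = z(ψ + 1)(e + 1)` and its image under `z ↦ -z` add and subtract to
`e = z·o·(e + 1)` and `o = z(e + 1)²`; hence `e = z²(e + 1)³`.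

For `g = e + 1 = 1 + z²g³`, the Euler operator `θ = z d/dz` turns the algebraic equation into
the relation `(3 - 2g)·θg = 2g(g - 1)`, which no longer involves `z`. Differentiating it once
more and eliminating shows that `g` satisfies the hypergeometric equation
`4θ(θ + 1)g = 3z²(3θ + 2)(3θ + 4)g`, i.e. the recurrence
`(2n + 2)(2n + 3)·c_{n+1} = 3(3n + 1)(3n + 2)·c_n` for `c_n = [z^{2n}]g`,
which is also the recurrence of the Fuss–Catalan numbers `C(3n, n)/(2n + 1)`.
-/

namespace PowerSeries

theorem coeff_ofNat_mul {R : Type*} [Semiring R] (m : ℕ) [m.AtLeastTwo] (f : R⟦X⟧) (n : ℕ) :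
    coeff n (ofNat(m) * f) = ofNat(m) * coeff n f := by
  rw [← map_ofNat C, coeff_C_mul]

section Euler

variable {R : Type*} [CommRing R]

variable (R) in
noncomputable def eulerDerivation : Derivation R R⟦X⟧ R⟦X⟧ := (X : R⟦X⟧) • d⁄dX R

local notation "θ" => eulerDerivation _

theorem eulerDerivation_apply (f : R⟦X⟧) : θ f = X * d⁄dX R f := rfl

theorem coeff_eulerDerivation (f : R⟦X⟧) (n : ℕ) : coeff n (θ f) = n * coeff n f := by
  rcases n with _ | n
  · simp [eulerDerivation_apply]
  · rw [eulerDerivation_apply, coeff_succ_X_mul, coeff_derivative, mul_comm, Nat.cast_succ]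

theorem eulerDerivation_X : θ (X : R⟦X⟧) = X := by
  simp [eulerDerivation_apply]

theorem eulerDerivation_ofNat (n : ℕ) [n.AtLeastTwo] : θ (ofNat(n) : R⟦X⟧) = 0 := by
  rw [← Nat.cast_ofNat]
  exact Derivation.map_natCast _ _

theorem eulerDerivation_of_eq_one_add_X_sq_mul_cube {g : R⟦X⟧} (hg : g = 1 + X ^ 2 * g ^ 3) :
    (3 - 2 * g) * θ g = 2 * g * (g - 1) := by
  have h := congrArg θ hg
  simp only [Derivation.leibniz, Derivation.leibniz_pow, Derivation.map_one_eq_zero, map_add,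
    eulerDerivation_X, smul_eq_mul, nsmul_eq_mul] at h
  push_cast at h
  linear_combination g * h - (3 * θ g + 2 * g) * hg

theorem eulerDerivation_ode_of_eq_one_add_X_sq_mul_cube [IsDomain R] {g : R⟦X⟧}
    (hg : g = 1 + X ^ 2 * g ^ 3) :
    4 * (θ (θ g) + θ g) = X ^ 2 * (3 * (9 * θ (θ g) + 18 * θ g + 8 * g)) := by
  have h₁ := eulerDerivation_of_eq_one_add_X_sq_mul_cube hg
  have h₂ := congrArg θ h₁
  simp only [Derivation.leibniz, map_sub, eulerDerivation_ofNat, Derivation.map_one_eq_zero,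
    smul_eq_mul] at h₂
  -- after `X²g³ = g - 1`, the coefficient of `θ²g` is `4g³ - 27g + 27 = (3 - 2g)²(g + 3)`
  have hcube :
      g ^ 3 * (4 * (θ (θ g) + θ g) - X ^ 2 * (3 * (9 * θ (θ g) + 18 * θ g + 8 * g))) = 0 := by
    linear_combination (3 - 2 * g) * (g + 3) * h₂ + (2 * (g + 3) * θ g + 12) * h₁
      + 3 * (9 * θ (θ g) + 18 * θ g + 8 * g) * hg
  have hg₀ : g ^ 3 ≠ 0 := pow_ne_zero 3 fun h => by simpa [h] using congrArg (coeff 0) hg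
  exact sub_eq_zero.mp ((mul_eq_zero.mp hcube).resolve_left hg₀)

theorem coeff_add_two_of_eq_one_add_X_sq_mul_cube [IsDomain R] {g : R⟦X⟧}
    (hg : g = 1 + X ^ 2 * g ^ 3) (k : ℕ) :
    4 * ((k + 2) * (k + 3)) * coeff (k + 2) g = 3 * ((3 * k + 2) * (3 * k + 4)) * coeff k g := by
  have h := congrArg (coeff (k + 2)) (eulerDerivation_ode_of_eq_one_add_X_sq_mul_cube hg)
  simp only [coeff_X_pow_mul, coeff_ofNat_mul, map_add, coeff_eulerDerivation] at h
  push_cast at h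
  linear_combination h

end Euler

end PowerSeries

open PowerSeries

section FussCatalan

variable (K : Type*) [Field K]

noncomputable def fussCatalan (n : ℕ) : K := 1 / (2 * n + 1) * (3 * n).choose n

theorem fussCatalan_zero : fussCatalan K 0 = 1 := by
  simp [fussCatalan]

variable {K} [CharZero K]

theorem fussCatalan_succ (k : ℕ) :
    (2 * k + 2) * (2 * k + 3) * fussCatalan K (k + 1) =
      3 * (3 * k + 1) * (3 * k + 2) * fussCatalan K k := by
  have h₁ := Nat.add_one_mul_choose_eq (3 * k + 2) k
  have h₂ := Nat.choose_mul_succ_eq (3 * k + 1) k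
  have h₃ := Nat.choose_mul_succ_eq (3 * k) k
  rw [show 3 * k + 2 + 1 = 3 * (k + 1) by omega] at h₁
  rw [show 3 * k + 1 + 1 - k = 2 * k + 2 by omega, show 3 * k + 1 + 1 = 3 * k + 2 by omega] at h₂
  rw [show 3 * k + 1 - k = 2 * k + 1 by omega] at h₃
  apply_fun (Nat.cast : ℕ → K) at h₁ h₂ h₃
  push_cast at h₁ h₂ h₃
  have hk : 2 * (k : K) + 1 ≠ 0 := by norm_cast
  have hk₁ : 2 * ((k + 1 : ℕ) : K) + 1 ≠ 0 := by norm_cast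
  simp only [fussCatalan]
  field_simp
  push_cast
  linear_combination (-2 * (2 * (k : K) + 1) * (2 * k + 3)) * h₁
    - 3 * (2 * (k : K) + 1) * (2 * k + 3) * h₂ - 3 * (2 * (k : K) + 3) * (3 * k + 2) * h₃

theorem coeff_two_mul_of_eq_one_add_X_sq_mul_cube {g : K⟦X⟧} (hg : g = 1 + X ^ 2 * g ^ 3)
    (n : ℕ) : coeff (2 * n) g = fussCatalan K n := by
  induction n with
  | zero => simpa [fussCatalan_zero] using congrArg (coeff 0) hg
  | succ k ih =>
    have hrec := coeff_add_two_of_eq_one_add_X_sq_mul_cube hg (2 * k)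
    push_cast at hrec
    rw [ih] at hrec
    have hne : 4 * ((2 * (k : K) + 2) * (2 * k + 3)) ≠ 0 := by norm_cast
    refine mul_left_cancel₀ hne ?_
    rw [show 2 * (k + 1) = 2 * k + 2 by ring]
    linear_combination hrec - 4 * fussCatalan_succ (K := K) k

end FussCatalan

theorem coeff_evenPart_of_even (f : ℝ⟦X⟧) {n : ℕ} (hn : Even n) :
    coeff n (evenPart f) = coeff n f := by
  simp [evenPart, hn]

theorem rescale_neg_one_evenPart (f : ℝ⟦X⟧) : rescale (-1) (evenPart f) = evenPart f := by
  ext n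
  rcases Nat.even_or_odd n with hn | hn
  · simp [evenPart, coeff_rescale, hn.neg_one_pow]
  · simp [evenPart, coeff_rescale, Nat.not_even_iff_odd.mpr hn]

theorem rescale_neg_one_eq_two_mul_evenPart_sub (f : ℝ⟦X⟧) :
    rescale (-1) f = 2 * evenPart f - f := by
  ext n
  rcases Nat.even_or_odd n with hn | hn
  · simp [two_mul, evenPart, coeff_rescale, hn.neg_one_pow, hn]
  · simp [two_mul, evenPart, coeff_rescale, hn.neg_one_pow, Nat.not_even_iff_odd.mpr hn]

theorem evenPart_eq_X_sq_mul_cube {ψ : ℝ⟦X⟧} (heq : ψ = X * (ψ + 1) * (evenPart ψ + 1)) :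
    evenPart ψ = X ^ 2 * (evenPart ψ + 1) ^ 3 := by
  have hneg := congrArg (rescale (-1)) heq
  simp only [map_mul, map_add, map_one, rescale_X, rescale_neg_one_evenPart,
    rescale_neg_one_eq_two_mul_evenPart_sub ψ, map_neg] at hneg
  have h₂ : (2 : ℝ⟦X⟧) ≠ 0 :=
    ne_of_apply_ne constantCoeff (by rw [map_ofNat, map_zero]; norm_num)
  refine mul_left_cancel₀ h₂ ?_
  linear_combination (1 + X * (evenPart ψ + 1)) * heq + (1 - X * (evenPart ψ + 1)) * hneg

theorem statement11_general (ψ : PowerSeries ℝ)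
    (heq : ψ = PowerSeries.X * (ψ + 1) * (evenPart ψ + 1)) :
    evenPart ψ = PowerSeries.X ^ 2 * (evenPart ψ + 1) ^ 3 ∧
    ∀ n : ℕ, 1 ≤ n →
      PowerSeries.coeff (2*n) ψ = (1 / (2*n+1 : ℝ)) * (Nat.choose (3*n) n : ℝ) := by
  have he := evenPart_eq_X_sq_mul_cube heq
  refine ⟨he, fun n hn => ?_⟩
  have hg : evenPart ψ + 1 = 1 + X ^ 2 * (evenPart ψ + 1) ^ 3 := by rw [← he, add_comm]
  have hcoeff := coeff_two_mul_of_eq_one_add_X_sq_mul_cube hg n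
  rwa [map_add, coeff_one, if_neg (by omega), add_zero,
    coeff_evenPart_of_even ψ (even_two_mul n)] at hcoeff

/-- Example 7.1. If `ψ` has zero constant term and
`ψ = z·(ψ+1)·(ψ_e+1)`, where `ψ_e` is the even part of `ψ`, then
`ψ_e = z²·(ψ_e+1)³` and the coefficient of `z^{2n}` in `ψ` is the Fuss–Catalan number
`(1/(2n+1))·C(3n,n)` for every `n ≥ 1`. -/
theorem statement11 (ψ : PowerSeries ℝ) (h0 : PowerSeries.constantCoeff ψ = 0)
    (heq : ψ = PowerSeries.X * (ψ + 1) * (evenPart ψ + 1)) :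
    evenPart ψ = PowerSeries.X ^ 2 * (evenPart ψ + 1) ^ 3 ∧
    ∀ n : ℕ, 1 ≤ n →
      PowerSeries.coeff (2*n) ψ = (1 / (2*n+1 : ℝ)) * (Nat.choose (3*n) n : ℝ) :=
  statement11_general ψ heq
end

section
/- Let M ∈ ℝ[[z]] be a formal power series with constant term 1 satisfying M² = 1 + 4z·M⁶, and let m_n denote the coefficient of z^n in M. Then for every n ≥ 0: (i) Σ_{k=0}^{n} m_k·m_{n−k} = (4^n/(3n+1))·C(3n+1, n); and (ii) m_n = 4^n·R_n(2, 1/2) = (2^n/n!)·Π_{j=1}^{n−1}(4n + 2j + 1). -/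
open Finset
open scoped Classical

/-!
With `u = M²` the equation reads `u = 1 + 4z·u³`. Applying the Euler operator `θ = z·d/dz`
gives `(3 - 2u)·θu = u(u - 1)`, and `M = u^{1/2}` satisfies `(3 - 2u)·θM = ½(u - 1)·M`.
Any `F` with `(3 - 2u)·θF = r(u - 1)·F` (morally `F = u^r`) satisfies the hypergeometric
equation `θ(2θ + r - 1)(2θ + r)F = 4z(3θ + r)(3θ + r + 1)(3θ + r + 2)F`, so its coefficients
satisfy the two-term recurrence of `4ⁿ·R_n(2, r)`. Take `r = 1` for `(i)` and `r = 1/2`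
for `(ii)`.
-/

open scoped Nat

section Raney

open Polynomial

noncomputable def raney (p : ℕ) (r : ℝ) (n : ℕ) : ℝ :=
  r / ((p + 1) * n + r) * ((descPochhammer ℝ n).eval ((p + 1) * n + r) / n !)

theorem descPochhammer_eval_add {R : Type*} [CommRing R] (x : R) (n m : ℕ) :
    (descPochhammer R (n + m)).eval x =
      (descPochhammer R n).eval x * (descPochhammer R m).eval (x - n) := by
  rw [← descPochhammer_mul, eval_mul, eval_comp, eval_sub, eval_X, eval_natCast]

theorem raney_zero (p : ℕ) {r : ℝ} (hr : r ≠ 0) : raney p r 0 = 1 := by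
  simp [raney, hr]

theorem raney_succ (p : ℕ) {r : ℝ} (hr : 0 < r) (n : ℕ) :
    (n + 1) * (descPochhammer ℝ p).eval (p * (n + 1) + r) * raney p r (n + 1) =
      ((p + 1) * n + r) * (descPochhammer ℝ p).eval ((p + 1) * n + r + p) * raney p r n := by
  have hx : ((p + 1) * ((n + 1 : ℕ) : ℝ) + r) ≠ 0 := by positivity
  have hy : ((p + 1) * (n : ℝ) + r) ≠ 0 := by positivity
  -- with `x = (p+1)(n+1) + r`, split the falling factorial `(x)_(n+1+p)` in two ways:
  -- as `(x)_(n+1) (x-n-1)_p` and as `x (x-1)_p (x-1-p)_n`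
  have key : (descPochhammer ℝ (n + 1)).eval ((p + 1) * ((n + 1 : ℕ) : ℝ) + r) *
      (descPochhammer ℝ p).eval (p * (n + 1) + r) =
      ((p + 1) * ((n + 1 : ℕ) : ℝ) + r) * ((descPochhammer ℝ p).eval ((p + 1) * n + r + p) *
        (descPochhammer ℝ n).eval ((p + 1) * n + r)) := by
    have h := descPochhammer_eval_add ((p + 1) * ((n + 1 : ℕ) : ℝ) + r) (n + 1) p
    rw [show n + 1 + p = 1 + (p + n) by ring, descPochhammer_eval_add, descPochhammer_eval_add,
      descPochhammer_one, eval_X] at h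
    rw [show (p + 1) * ((n + 1 : ℕ) : ℝ) + r - ((n + 1 : ℕ) : ℝ) = p * (n + 1) + r by
        push_cast; ring,
      show (p + 1) * ((n + 1 : ℕ) : ℝ) + r - ((1 : ℕ) : ℝ) = (p + 1) * n + r + p by
        push_cast; ring,
      show (p + 1) * n + r + p - p = (p + 1) * (n : ℝ) + r by ring] at h
    exact h.symm
  simp only [raney]
  -- opaque values, so that `field_simp` cannot rewrite the arguments of `eval`
  generalize (descPochhammer ℝ (n + 1)).eval ((p + 1) * ((n + 1 : ℕ) : ℝ) + r) = A at key ⊢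
  generalize (descPochhammer ℝ p).eval (p * (n + 1) + r) = B at key ⊢
  generalize (descPochhammer ℝ p).eval ((p + 1) * n + r + p) = C at key ⊢
  generalize (descPochhammer ℝ n).eval ((p + 1) * n + r) = D at key ⊢
  rw [Nat.factorial_succ]
  push_cast at key hx ⊢
  field_simp
  linear_combination key

theorem raney_one (p n : ℕ) :
    raney p 1 n = ((p + 1) * n + 1).choose n / ((p + 1) * n + 1 : ℝ) := by
  rw [raney, Nat.cast_choose_eq_descPochhammer_div]
  push_cast
  ring

theorem four_pow_mul_raney_two_half (n : ℕ) :
    4 ^ n * raney 2 2⁻¹ n =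
      2 ^ n / n ! * ∏ j ∈ Icc 1 (n - 1), ((4 * n + 2 * j + 1 : ℕ) : ℝ) := by
  rcases n with _ | m
  · simp [raney]
  have hprod : ∏ j ∈ Icc 1 m, ((4 * (m + 1) + 2 * j + 1 : ℕ) : ℝ) =
      2 ^ m * (descPochhammer ℝ m).eval (3 * ((m + 1 : ℕ) : ℝ) - 2⁻¹) := by
    rw [descPochhammer_eval_eq_prod_range, ← prod_range_reflect, ← Ico_add_one_right_eq_Icc,
      prod_Ico_eq_prod_range, Nat.add_sub_cancel,
      show (2 : ℝ) ^ m = ∏ _j ∈ range m, 2 by simp, ← prod_mul_distrib]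
    refine prod_congr rfl fun j hj => ?_
    rw [Nat.sub_sub, Nat.cast_sub (by simp at hj; omega)]
    push_cast
    ring
  have hx : (((2 : ℕ) : ℝ) + 1) * ((m + 1 : ℕ) : ℝ) + 2⁻¹ ≠ 0 := by positivity
  rw [raney, descPochhammer_succ_left, eval_mul, eval_X, eval_comp, eval_sub, eval_X, eval_one,
    Nat.add_sub_cancel, hprod, show (((2 : ℕ) : ℝ) + 1) * ((m + 1 : ℕ) : ℝ) + 2⁻¹ - 1 =
      3 * ((m + 1 : ℕ) : ℝ) - 2⁻¹ by norm_num; ring,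
    show (4 : ℝ) = 2 ^ 2 by norm_num, ← pow_mul]
  field_simp
  ring

end Raney

namespace PowerSeries

section EulerOp

variable (R : Type*) [CommRing R]

noncomputable def eulerOp : Derivation R R⟦X⟧ R⟦X⟧ := (X : R⟦X⟧) • derivative R

variable {R}

theorem eulerOp_apply (f : R⟦X⟧) : eulerOp R f = X * derivative R f := rfl

@[simp] theorem coeff_eulerOp (n : ℕ) (f : R⟦X⟧) : coeff n (eulerOp R f) = n * coeff n f := by
  rcases n with _ | n
  · simp [eulerOp_apply]
  · rw [eulerOp_apply, coeff_succ_X_mul, coeff_derivative]; push_cast; ring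

@[simp] theorem eulerOp_C (a : R) : eulerOp R (C a) = 0 := by simp [eulerOp_apply]

@[simp] theorem eulerOp_ofNat (n : ℕ) [n.AtLeastTwo] :
    eulerOp R (no_index (OfNat.ofNat n : R⟦X⟧)) = 0 :=
  (eulerOp R).map_natCast n

@[simp] theorem eulerOp_X : eulerOp R (X : R⟦X⟧) = X := by simp [eulerOp_apply]

end EulerOp

section Hypergeometric

variable {K : Type*} [Field K] {c r : K} {u F M : K⟦X⟧}
local notation "θ" => eulerOp K

theorem constantCoeff_eq_one_of_cubic (hu : C c * X * u ^ 3 = u - 1) : constantCoeff u = 1 := by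
  have := congrArg constantCoeff hu
  simp only [map_mul, constantCoeff_C, constantCoeff_X, mul_zero, zero_mul, map_sub,
    constantCoeff_one] at this
  linear_combination -this

theorem eulerOp_of_cubic (hu : C c * X * u ^ 3 = u - 1) : (3 - 2 * u) * θ u = u * (u - 1) := by
  have h := congrArg θ hu
  simp only [Derivation.leibniz, Derivation.leibniz_pow, eulerOp_X, eulerOp_C, map_sub,
    Derivation.map_one_eq_zero, smul_eq_mul, nsmul_eq_mul] at h
  linear_combination (-u) * h + (3 * θ u + u) * hu

theorem hypergeometric_ode_of_eulerOp_eq (hu : C c * X * u ^ 3 = u - 1)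
    (hF : (3 - 2 * u) * θ F = C r * (u - 1) * F) :
    C 4 * θ (θ (θ F)) + C (4 * r - 2) * θ (θ F) + C (r * (r - 1)) * θ F =
      C c * X * (C 27 * θ (θ (θ F)) + C (27 * (r + 1)) * θ (θ F) +
        C (9 * r ^ 2 + 18 * r + 6) * θ F + C (r * (r + 1) * (r + 2)) * F) := by
  have hA := eulerOp_of_cubic hu
  have h2 : (3 - 2 * u) ^ 3 * θ (θ F) =
      F * (C r * (u - 1) * (C r * (u - 1) * (3 - 2 * u) + u)) := by
    have h := congrArg θ hF
    simp only [Derivation.leibniz, eulerOp_C, eulerOp_ofNat, map_sub, Derivation.map_one_eq_zero,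
      smul_eq_mul] at h
    linear_combination (3 - 2 * u) ^ 2 * h
      + (2 * (3 - 2 * u) * θ u + C r * (u - 1) * (3 - 2 * u)) * hF
      + (C r * (3 - 2 * u) * F + 2 * C r * (u - 1) * F) * hA
  have h3 : (3 - 2 * u) ^ 5 * θ (θ (θ F)) = F * (C r * (u - 1) *
      ((C r * (u - 1) * (3 - 2 * u)) ^ 2 + 3 * u * (C r * (u - 1) * (3 - 2 * u)) +
        u * (2 * u ^ 2 + 2 * u - 3))) := by
    have h := congrArg θ h2
    simp only [Derivation.leibniz, Derivation.leibniz_pow, eulerOp_C, eulerOp_ofNat, map_sub,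
      map_add, Derivation.map_one_eq_zero, smul_eq_mul, nsmul_eq_mul] at h
    linear_combination (3 - 2 * u) ^ 2 * h + 6 * (3 - 2 * u) * θ u * h2
      + (6 * F * (C r * (u - 1) * (C r * (u - 1) * (3 - 2 * u) + u))
        + (3 - 2 * u) * F * (C r * (C r * (u - 1) * (3 - 2 * u) + u)
          + C r * (u - 1) * (C r * (5 - 4 * u) + 1))) * hA
      + (3 - 2 * u) * (C r * (u - 1) * (C r * (u - 1) * (3 - 2 * u) + u)) * hF
  have hD : u ^ 3 * (3 - 2 * u) ^ 5 ≠ 0 := by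
    intro h
    have h0 := congrArg constantCoeff h
    simp only [map_mul, map_pow, map_sub, map_ofNat, constantCoeff_eq_one_of_cubic hu] at h0
    norm_num at h0
  -- `θᵏF` has denominator `(3 - 2u)^(2k - 1)` and `C c * X = (u - 1) / u³`
  refine sub_eq_zero.mp ((mul_eq_zero.mp ?_).resolve_left hD)
  simp only [map_sub, map_mul, map_add, map_ofNat, map_pow, map_one]
  linear_combination
    (4 * u ^ 3 - 27 * C c * X * u ^ 3) * h3
    + ((4 * C r - 2) * u ^ 3 - 27 * (C r + 1) * C c * X * u ^ 3) * (3 - 2 * u) ^ 2 * h2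
    + (C r * (C r - 1) * u ^ 3 - (9 * C r ^ 2 + 18 * C r + 6) * C c * X * u ^ 3) *
      (3 - 2 * u) ^ 4 * hF
    - (27 * F * (C r * (u - 1) * ((C r * (u - 1) * (3 - 2 * u)) ^ 2 +
          3 * u * (C r * (u - 1) * (3 - 2 * u)) + u * (2 * u ^ 2 + 2 * u - 3)))
      + 27 * (C r + 1) * (3 - 2 * u) ^ 2 * F * (C r * (u - 1) * (C r * (u - 1) * (3 - 2 * u) + u))
      + (9 * C r ^ 2 + 18 * C r + 6) * (3 - 2 * u) ^ 4 * F * (C r * (u - 1))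
      + C r * (C r + 1) * (C r + 2) * (3 - 2 * u) ^ 5 * F) * hu

theorem coeff_succ_recurrence_of_eulerOp_eq (hu : C c * X * u ^ 3 = u - 1)
    (hF : (3 - 2 * u) * θ F = C r * (u - 1) * F) (n : ℕ) :
    (n + 1) * (2 * n + r + 1) * (2 * n + r + 2) * coeff (n + 1) F =
      c * ((3 * n + r) * (3 * n + r + 1) * (3 * n + r + 2)) * coeff n F := by
  have h := congrArg (coeff (n + 1)) (hypergeometric_ode_of_eulerOp_eq hu hF)
  simp only [mul_assoc, add_mul, coeff_C_mul, coeff_succ_X_mul, map_add, coeff_eulerOp] at h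
  push_cast at h
  linear_combination h

theorem eulerOp_of_sq_eq [NeZero (2 : K)] (hu : C c * X * u ^ 3 = u - 1) (hM : M ^ 2 = u) :
    (3 - 2 * u) * θ M = C 2⁻¹ * (u - 1) * M := by
  have hM0 : M ≠ 0 := by
    rintro rfl
    simpa [← hM] using constantCoeff_eq_one_of_cubic hu
  have hθ : θ u = 2 * M * θ M := by
    rw [← hM, Derivation.leibniz_pow]
    simp only [smul_eq_mul, nsmul_eq_mul]
    push_cast
    ring
  have h2 : C (2⁻¹ : K) * 2 = 1 := by
    rw [← map_ofNat C 2, ← map_mul, inv_mul_cancel₀ two_ne_zero, map_one]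
  refine mul_left_cancel₀ hM0 ?_
  linear_combination C (2⁻¹ : K) * (eulerOp_of_cubic hu) - C (2⁻¹ : K) * (3 - 2 * u) * hθ
    - C (2⁻¹ : K) * (u - 1) * hM - (3 - 2 * u) * M * θ M * h2

end Hypergeometric

theorem coeff_eq_pow_mul_raney {c r : ℝ} {u F : ℝ⟦X⟧} (hr : 0 < r)
    (hu : C c * X * u ^ 3 = u - 1)
    (hF : (3 - 2 * u) * eulerOp ℝ F = C r * (u - 1) * F) (hF0 : constantCoeff F = 1) (n : ℕ) :
    coeff n F = c ^ n * raney 2 r n := by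
  induction n with
  | zero => simp [hF0, raney_zero 2 hr.ne']
  | succ n ih =>
    have hrec := coeff_succ_recurrence_of_eulerOp_eq hu hF n
    have hR := raney_succ 2 hr n
    simp only [descPochhammer_eval_eq_prod_range, Finset.prod_range_succ,
      Finset.prod_range_zero] at hR
    have hne : ((n : ℝ) + 1) * (2 * n + r + 1) * (2 * n + r + 2) ≠ 0 := by positivity
    refine mul_left_cancel₀ hne ?_
    push_cast at hR
    linear_combination hrec + c * ((3 * n + r) * (3 * n + r + 1) * (3 * n + r + 2)) * ih
      - c ^ (n + 1) * hR

end PowerSeries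

/-- conclusion of Example 7.2. If `M` has constant term 1 and
`M² = 1 + 4z·M⁶`, with `m_n` the coefficient of `zⁿ` in `M`, then for every `n`:
(i) `Σ_{k=0}^n m_k·m_{n−k} = (4ⁿ/(3n+1))·C(3n+1, n)`, and
(ii) `m_n = 4ⁿ·R_n(2,1/2) = (2ⁿ/n!)·Π_{j=1}^{n−1}(4n+2j+1)`, where
`R_n(2,1/2) = ((1/2)/(3n+1/2))·C(3n+1/2, n)` with the generalized binomial coefficient
`C(x,n) = x(x−1)⋯(x−n+1)/n!`. -/
theorem statement13 (M : PowerSeries ℝ) (h0 : PowerSeries.constantCoeff M = 1)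
    (heq : M ^ 2 = 1 + 4 * PowerSeries.X * M ^ 6) :
    ∀ n : ℕ,
      (∑ k ∈ Finset.range (n+1),
          PowerSeries.coeff k M * PowerSeries.coeff (n-k) M =
        (4 : ℝ)^n / (3*n+1 : ℝ) * (Nat.choose (3*n+1) n : ℝ)) ∧
      (PowerSeries.coeff n M =
        (4 : ℝ)^n * ((1/2) / ((3*n : ℝ) + 1/2)) *
          ((∏ i ∈ Finset.range n, ((3*n : ℝ) + 1/2 - (i : ℝ))) / (Nat.factorial n : ℝ))) ∧
      (PowerSeries.coeff n M =
        (2 : ℝ)^n / (Nat.factorial n : ℝ) *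
          ∏ j ∈ Finset.Icc 1 (n-1), ((4*n + 2*j + 1 : ℕ) : ℝ)) := by
  have hu : PowerSeries.C 4 * PowerSeries.X * (M ^ 2) ^ 3 = M ^ 2 - 1 := by
    rw [map_ofNat]
    linear_combination -heq
  have hN := PowerSeries.coeff_eq_pow_mul_raney (F := M ^ 2) one_pos hu
    (by simp only [map_one]; linear_combination PowerSeries.eulerOp_of_cubic hu) (by simp [h0])
  have hM := PowerSeries.coeff_eq_pow_mul_raney (by norm_num) hu
    (PowerSeries.eulerOp_of_sq_eq hu rfl) h0
  intro n
  refine ⟨?_, ?_, ?_⟩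
  · rw [← Finset.Nat.sum_antidiagonal_eq_sum_range_succ
      (fun i j => PowerSeries.coeff i M * PowerSeries.coeff j M), ← PowerSeries.coeff_mul, ← sq,
      hN, raney_one]
    push_cast
    ring
  · rw [hM, raney, descPochhammer_eval_eq_prod_range]
    norm_num [mul_assoc]
  · rw [hM, four_pow_mul_raney_two_half]
end

section
/- Fix integers p ≥ 1 and k ≥ 1. Let σ be a noncrossing perfect matching of {1,…,4pk} such that every pair {a,b} ∈ σ satisfies at least one of: (1) a+b ≡ 1 (mod 4p); (2) {ρ̃(a), ρ̃(b)} = {2i, 2i+1} for some 1 ≤ i ≤ p−1; (3) {ρ̃(a), ρ̃(b)} = {4p−2i, 4p+1−2i} for some 1 ≤ i ≤ p−1, where ρ̃(t) ∈ {1,…,4p} is the residue of t modulo 4p. Then σ has even depth: every pair P ∈ σ that contains no other pair nested inside it (i.e., there is no P' ∈ σ with min P < min P' < max P' < max P) has even depth, where the depth of a pair P is defined as 1 plus the number of pairs P'' ∈ σ with min P'' < min P < max P < max P''. -/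
open Finset
open scoped Classical

/-!
An innermost pair of a noncrossing matching joins two consecutive points `a, a + 1` (0-based),
and each of the three adaptedness conditions forces `a` to be odd. Every other pair lies either
outside `{a, a + 1}` or encloses it, and it encloses it iff exactly one of its points is below `a`.
Since the pairs partition `{0, …, a - 1}`, the number of such pairs has the parity of `a`: it is
odd, so the depth is even.
-/

lemma Finset.card_Iio_inter_pair_eq_one {α : Type*} [LinearOrder α] [LocallyFiniteOrderBot α]
    {x y : α} (a : α) (hxy : x < y) :
    (Finset.Iio a ∩ {x, y}).card = 1 ↔ x < a ∧ a ≤ y := by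
  rcases lt_or_ge y a with hy | hy
  · simp [Finset.inter_insert_of_mem, hy, hxy.trans hy, Finset.card_pair hxy.ne]
  rcases lt_or_ge x a with hx | hx
  · simp [Finset.inter_insert_of_mem, hx, hy]
  · simp [Finset.inter_insert_of_notMem, hx.not_gt, hy.not_gt]

lemma SameBlock.symm {n : ℕ} {Q : Finset (Finset (Fin n))} {a b : Fin n}
    (h : SameBlock Q a b) : SameBlock Q b a :=
  let ⟨B, hB, ha, hb⟩ := h; ⟨B, hB, hb, ha⟩

namespace IsPartitionOf

variable {n : ℕ} {Q : Finset (Finset (Fin n))}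

lemma eq_of_mem (hQ : IsPartitionOf n Q) {B C : Finset (Fin n)} (hB : B ∈ Q) (hC : C ∈ Q)
    {x : Fin n} (hxB : x ∈ B) (hxC : x ∈ C) : B = C := by
  obtain ⟨D, -, hD⟩ := hQ.2 x
  rw [hD B ⟨hB, hxB⟩, hD C ⟨hC, hxC⟩]

lemma mem_of_sameBlock (hQ : IsPartitionOf n Q) {B : Finset (Fin n)} (hB : B ∈ Q)
    {x y : Fin n} (hx : x ∈ B) (hxy : SameBlock Q x y) : y ∈ B := by
  obtain ⟨C, hC, hxC, hyC⟩ := hxy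
  rwa [hQ.eq_of_mem hB hC hx hxC]

lemma sum_card_inter (hQ : IsPartitionOf n Q) (S : Finset (Fin n)) :
    ∑ C ∈ Q, (S ∩ C).card = S.card := by
  have hdisj : (Q : Set (Finset (Fin n))).PairwiseDisjoint (S ∩ ·) := by
    intro B hB C hC hBC
    refine Finset.disjoint_left.mpr fun x hxB hxC => hBC ?_
    exact hQ.eq_of_mem hB hC (Finset.mem_inter.mp hxB).2 (Finset.mem_inter.mp hxC).2
  have hcover : Q.biUnion (S ∩ ·) = S := by
    ext x
    obtain ⟨C, ⟨hC, hxC⟩, -⟩ := hQ.2 x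
    simp only [Finset.mem_biUnion, Finset.mem_inter]
    exact ⟨fun ⟨_, _, hx, _⟩ => hx, fun hx => ⟨C, hC, hx, hxC⟩⟩
  rw [← Finset.card_biUnion hdisj, hcover]

end IsPartitionOf

namespace IsPairPartition

variable {n : ℕ} {Q : Finset (Finset (Fin n))}

lemma eq_pair (hQ : IsPairPartition n Q) {B : Finset (Fin n)} (hB : B ∈ Q) {a b : Fin n}
    (ha : a ∈ B) (hb : b ∈ B) (hab : a ≠ b) : B = {a, b} :=
  (Finset.eq_of_subset_of_card_le (Finset.insert_subset ha (Finset.singleton_subset_iff.mpr hb))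
    (by rw [Finset.card_pair hab, hQ.2 B hB])).symm

lemma exists_eq_pair_lt (hQ : IsPairPartition n Q) {C : Finset (Fin n)} (hC : C ∈ Q) :
    ∃ x y, x < y ∧ C = {x, y} := by
  obtain ⟨x, y, hxy, rfl⟩ := Finset.card_eq_two.mp (hQ.2 C hC)
  rcases hxy.lt_or_gt with h | h
  · exact ⟨x, y, h, rfl⟩
  · exact ⟨y, x, h, Finset.pair_comm x y⟩

/-- Blocks meeting `S` in `0` or `2` points do not change the parity of `#S`. -/
lemma card_filter_card_inter_eq_one_mod_two (hQ : IsPairPartition n Q) (S : Finset (Fin n)) :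
    (Q.filter fun C => (S ∩ C).card = 1).card % 2 = S.card % 2 := by
  have hterm : ∀ C ∈ Q, (S ∩ C).card % 2 = if (S ∩ C).card = 1 then 1 else 0 := by
    intro C hC
    have := (Finset.card_le_card (Finset.inter_subset_right (s₁ := S))).trans (hQ.2 C hC).le
    split_ifs <;> omega
  rw [← hQ.1.sum_card_inter S, Finset.sum_nat_mod, Finset.sum_congr rfl hterm,
    Finset.sum_boole, Nat.cast_id]

/-- Since `b = a + 1`, every other pair has both points below `a` or above `b`, so it encloses
`{a, b}` iff exactly one of its points lies below `a`. -/
lemma filter_encloses_eq (hQ : IsPairPartition n Q) {a b : Fin n} (hB : {a, b} ∈ Q)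
    (hab : b.val = a.val + 1) :
    Q.filter (fun C => (∃ x ∈ C, x < a) ∧ (∃ y ∈ C, b < y)) =
      Q.filter (fun C => (Finset.Iio a ∩ C).card = 1) := by
  have hlt : a < b := Fin.lt_def.mpr (by omega)
  refine Finset.filter_congr fun C hC => ?_
  rcases eq_or_ne C {a, b} with rfl | hCB
  · simp [hlt.not_gt]
  obtain ⟨x, y, hxy, rfl⟩ := hQ.exists_eq_pair_lt hC
  have hnot : ∀ z ∈ ({x, y} : Finset (Fin n)), z ≠ a ∧ z ≠ b := fun z hz =>
    ⟨fun h => hCB (hQ.1.eq_of_mem hC hB hz (h ▸ Finset.mem_insert_self _ _)),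
     fun h => hCB (hQ.1.eq_of_mem hC hB hz (h ▸ Finset.mem_insert_of_mem
      (Finset.mem_singleton_self _)))⟩
  have hx := hnot x (Finset.mem_insert_self _ _)
  have hy := hnot y (Finset.mem_insert_of_mem (Finset.mem_singleton_self _))
  rw [Finset.card_Iio_inter_pair_eq_one a hxy]
  simp only [Finset.mem_insert, Finset.mem_singleton, exists_eq_or_imp, exists_eq_left,
    Fin.lt_def, Fin.le_def, Fin.ne_iff_vne] at hx hy hxy ⊢
  omega

end IsPairPartition

namespace IsNoncrossing

variable {n : ℕ} {Q : Finset (Finset (Fin n))}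

lemma mem_Ioo_of_mem_Ioo (hnc : IsNoncrossing Q) (hQ : IsPairPartition n Q)
    {a b : Fin n} (hab : {a, b} ∈ Q) {C : Finset (Fin n)} (hC : C ∈ Q) {c d : Fin n}
    (hcC : c ∈ C) (hdC : d ∈ C) (hc : c ∈ Finset.Ioo a b) : d ∈ Finset.Ioo a b := by
  obtain ⟨hac, hcb⟩ := Finset.mem_Ioo.mp hc
  have ha : a ∈ ({a, b} : Finset (Fin n)) := by simp
  have hb : b ∈ ({a, b} : Finset (Fin n)) := by simp
  have hcB : c ∉ ({a, b} : Finset (Fin n)) := by simp [hac.ne', hcb.ne]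
  have hdB : d ∉ ({a, b} : Finset (Fin n)) := fun hd =>
    hcB (hQ.1.eq_of_mem hC hab hdC hd ▸ hcC)
  have hda : d ≠ a := fun h => hdB (h ▸ ha)
  have hdb : d ≠ b := fun h => hdB (h ▸ hb)
  refine Finset.mem_Ioo.mpr ⟨lt_of_not_ge fun hda' => hdB ?_, lt_of_not_ge fun hbd => hcB ?_⟩
  · exact hQ.1.mem_of_sameBlock hab ha <| SameBlock.symm <|
      hnc d a c b (lt_of_le_of_ne hda' hda) hac hcb ⟨C, hC, hdC, hcC⟩ ⟨_, hab, ha, hb⟩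
  · exact hQ.1.mem_of_sameBlock hab ha <|
      hnc a c b d hac hcb (lt_of_le_of_ne hbd hdb.symm) ⟨_, hab, ha, hb⟩ ⟨C, hC, hcC, hdC⟩

lemma val_eq_add_one_of_innermost (hnc : IsNoncrossing Q) (hQ : IsPairPartition n Q)
    {a b : Fin n} (hab : a < b) (hB : {a, b} ∈ Q)
    (hno : ¬ ∃ B' ∈ Q, ∃ a' ∈ B', ∃ b' ∈ B', a < a' ∧ a' < b' ∧ b' < b) :
    b.val = a.val + 1 := by
  by_contra hne
  have hlt : a.val + 1 < b.val := by omega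
  set c : Fin n := ⟨a.val + 1, hlt.trans b.isLt⟩
  have hc : c ∈ Finset.Ioo a b := Finset.mem_Ioo.mpr ⟨Fin.lt_def.mpr (by simp [c]), hlt⟩
  obtain ⟨C, ⟨hC, hcC⟩, -⟩ := hQ.1.2 c
  obtain ⟨d, hdC, hdc⟩ := Finset.exists_mem_ne (by rw [hQ.2 C hC]; norm_num) c
  obtain ⟨had, hdb⟩ := Finset.mem_Ioo.mp (hnc.mem_Ioo_of_mem_Ioo hQ hB hC hcC hdC hc)
  obtain ⟨hac, hcb⟩ := Finset.mem_Ioo.mp hc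
  rcases hdc.lt_or_gt with h | h
  · exact hno ⟨C, hC, d, hdC, c, hcC, had, h, hcb⟩
  · exact hno ⟨C, hC, c, hcC, d, hdC, hac, h, hdb⟩

end IsNoncrossing

def IsAdaptedPair (p : ℕ) {n : ℕ} (a b : Fin n) : Prop :=
  ((val1 a : ZMod (4*p)) + (val1 b : ZMod (4*p)) = 1) ∨
  (∃ i : ℕ, 1 ≤ i ∧ i ≤ p - 1 ∧
    ((res a (4*p) = 2*i ∧ res b (4*p) = 2*i + 1) ∨
     (res a (4*p) = 2*i + 1 ∧ res b (4*p) = 2*i))) ∨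
  (∃ i : ℕ, 1 ≤ i ∧ i ≤ p - 1 ∧
    ((res a (4*p) = 4*p - 2*i ∧ res b (4*p) = 4*p + 1 - 2*i) ∨
     (res a (4*p) = 4*p + 1 - 2*i ∧ res b (4*p) = 4*p - 2*i)))

lemma IsAdaptedPair.odd_of_val_eq_add_one {p n : ℕ} {a b : Fin n} (h : IsAdaptedPair p a b)
    (hab : b.val = a.val + 1) : Odd a.val := by
  simp only [IsAdaptedPair, val1, res, hab] at h
  rw [Nat.odd_iff]
  rcases h with h | ⟨i, hi1, hip, h⟩ | ⟨i, hi1, hip, h⟩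
  · have h4p : 4 * p ∣ 2 * a.val + 2 :=
      (ZMod.natCast_eq_zero_iff _ _).mp (by push_cast at h ⊢; linear_combination h)
    have : 4 ∣ 2 * a.val + 2 := (dvd_mul_right 4 p).trans h4p
    omega
  all_goals
    have hstep := Nat.add_mod_eq_ite (k := 4 * p) (m := a.val) (n := 1)
    rw [Nat.mod_eq_of_lt (show 1 < 4 * p by omega)] at hstep
    have := Nat.mod_mod_of_dvd a.val (show 2 ∣ 4 * p from ⟨2 * p, by ring⟩)
    have := Nat.mod_mod_of_dvd (a.val + 1) (show 2 ∣ 4 * p from ⟨2 * p, by ring⟩)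
    split_ifs at hstep <;> omega

theorem statement15_general (p k : ℕ)
    (Q : Finset (Finset (Fin (4*p*k))))
    (hQ : IsPairPartition (4*p*k) Q) (hnc : IsNoncrossing Q)
    (hadapted : ∀ B ∈ Q, ∀ a ∈ B, ∀ b ∈ B, a ≠ b →
      ((val1 a : ZMod (4*p)) + (val1 b : ZMod (4*p)) = 1) ∨
      (∃ i : ℕ, 1 ≤ i ∧ i ≤ p - 1 ∧
        ((res a (4*p) = 2*i ∧ res b (4*p) = 2*i + 1) ∨
         (res a (4*p) = 2*i + 1 ∧ res b (4*p) = 2*i))) ∨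
      (∃ i : ℕ, 1 ≤ i ∧ i ≤ p - 1 ∧
        ((res a (4*p) = 4*p - 2*i ∧ res b (4*p) = 4*p + 1 - 2*i) ∨
         (res a (4*p) = 4*p + 1 - 2*i ∧ res b (4*p) = 4*p - 2*i)))) :
    ∀ B ∈ Q, ∀ a ∈ B, ∀ b ∈ B, a < b →
      -- `B = {a, b}` contains no other pair of `Q` nested inside it
      (¬ ∃ B' ∈ Q, ∃ a' ∈ B', ∃ b' ∈ B', a < a' ∧ a' < b' ∧ b' < b) →
      -- then the depth of `B` is even
      Even ((Q.filter (fun B'' =>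
        (∃ a'' ∈ B'', a'' < a) ∧ (∃ b'' ∈ B'', b < b''))).card + 1) := by
  intro B hB a ha b hb hab hno
  have hadapt : IsAdaptedPair p a b := hadapted B hB a ha b hb hab.ne
  rw [hQ.eq_pair hB ha hb hab.ne] at hB
  have hsucc : b.val = a.val + 1 := hnc.val_eq_add_one_of_innermost hQ hab hB hno
  rw [hQ.filter_encloses_eq hB hsucc, Nat.even_add_one, Nat.not_even_iff_odd, Nat.odd_iff,
    hQ.card_filter_card_inter_eq_one_mod_two, Fin.card_Iio, ← Nat.odd_iff]
  exact hadapt.odd_of_val_eq_add_one hsucc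

/-- even-depth property from the proof of Lemma 4.1. Every
noncrossing perfect matching of `{1,…,4pk}` adapted to `W̃^k` (each pair satisfies
`a+b ≡ 1 (mod 4p)`, or has residues `{2i,2i+1}`, or `{4p−2i,4p+1−2i}` mod `4p` for some
`1 ≤ i ≤ p−1`) has even depth: every pair with no pair nested inside it has even depth,
where the depth of a pair `P` is `1` plus the number of pairs `P''` with
`min P'' < min P < max P < max P''`. -/
theorem statement15 (p k : ℕ) (hp : 1 ≤ p) (hk : 1 ≤ k)
    (Q : Finset (Finset (Fin (4*p*k))))
    (hQ : IsPairPartition (4*p*k) Q) (hnc : IsNoncrossing Q)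
    (hadapted : ∀ B ∈ Q, ∀ a ∈ B, ∀ b ∈ B, a ≠ b →
      ((val1 a : ZMod (4*p)) + (val1 b : ZMod (4*p)) = 1) ∨
      (∃ i : ℕ, 1 ≤ i ∧ i ≤ p - 1 ∧
        ((res a (4*p) = 2*i ∧ res b (4*p) = 2*i + 1) ∨
         (res a (4*p) = 2*i + 1 ∧ res b (4*p) = 2*i))) ∨
      (∃ i : ℕ, 1 ≤ i ∧ i ≤ p - 1 ∧
        ((res a (4*p) = 4*p - 2*i ∧ res b (4*p) = 4*p + 1 - 2*i) ∨
         (res a (4*p) = 4*p + 1 - 2*i ∧ res b (4*p) = 4*p - 2*i)))) :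
    ∀ B ∈ Q, ∀ a ∈ B, ∀ b ∈ B, a < b →
      -- `B = {a, b}` contains no other pair of `Q` nested inside it
      (¬ ∃ B' ∈ Q, ∃ a' ∈ B', ∃ b' ∈ B', a < a' ∧ a' < b' ∧ b' < b) →
      -- then the depth of `B` is even
      Even ((Q.filter (fun B'' =>
        (∃ a'' ∈ B'', a'' < a) ∧ (∃ b'' ∈ B'', b < b''))).card + 1) :=
  statement15_general p k Q hQ hnc hadapted
end
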